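/- Let Ω be a nonempty connected open subset of ℝ³, let τ > 0, and let n = (n₁, n₂, 0) : Ω → ℝ³ be of class C¹ with n₁(x)² + n₂(x)² = 1 for all x ∈ Ω and curl n + τ n = 0 on Ω. Then there exists θ ∈ ℝ such that n(x) = (cos(τ x₃ + θ), sin(τ x₃ + θ), 0) for all x = (x₁,x₂,x₃) ∈ Ω. (This classifies the solutions of the curl equation that are everywhere orthogonal to a fixed constant direction.) -/

import Mathlib

open MeasureTheory Real Set
open scoped RealInnerProductSpace

noncomputable section

/-- ℝ³ with its Euclidean structure. -/
abbrev E3 := EuclideanSpace ℝ (Fin 3)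

/-- Reinterpret a plain vector `Fin 3 → ℝ` as an element of Euclidean space. -/
def ofV (v : Fin 3 → ℝ) : E3 := WithLp.toLp 2 v

/-- Partial derivative `∂ᵢ f` of a scalar function on ℝ³. -/
def pd (f : E3 → ℝ) (i : Fin 3) (x : E3) : ℝ := fderiv ℝ f x (EuclideanSpace.single i 1)

/-- Divergence of a vector field: `div u = ∂₁u₁ + ∂₂u₂ + ∂₃u₃`. -/
def vdiv (u : E3 → E3) (x : E3) : ℝ := ∑ i, pd (fun y => u y i) i x

/-- Curl of a vector field:
`curl u = (∂₂u₃ − ∂₃u₂, ∂₃u₁ − ∂₁u₃, ∂₁u₂ − ∂₂u₁)`. -/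
def vcurl (u : E3 → E3) (x : E3) : E3 := ofV ![
  pd (fun y => u y 2) 1 x - pd (fun y => u y 1) 2 x,
  pd (fun y => u y 0) 2 x - pd (fun y => u y 2) 0 x,
  pd (fun y => u y 1) 0 x - pd (fun y => u y 0) 1 x]

/-- `|i∇ψ + Aψ|²(x) = Σⱼ |i ∂ⱼψ(x) + Aⱼ(x) ψ(x)|²`, the squared magnetic gradient. -/
def magSq (A : E3 → E3) (ψ : E3 → ℂ) (x : E3) : ℝ :=
  ∑ j, ‖Complex.I * fderiv ℝ ψ x (EuclideanSpace.single j 1) + (A x j : ℂ) * ψ x‖ ^ 2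

/-- `μ(A)`: the ground-state energy (lowest Neumann eigenvalue) of `(i∇+A)²` on `Ω`,
defined as the infimum of the Rayleigh quotient over admissible `ψ`. -/
def mu (Ω : Set E3) (A : E3 → E3) : ℝ :=
  sInf { r : ℝ | ∃ ψ : E3 → ℂ, ContDiffOn ℝ 1 ψ Ω ∧
    IntegrableOn (fun x => ‖ψ x‖ ^ 2) Ω ∧
    IntegrableOn (magSq A ψ) Ω ∧
    0 < (∫ x in Ω, ‖ψ x‖ ^ 2) ∧
    r = (∫ x in Ω, magSq A ψ x) / (∫ x in Ω, ‖ψ x‖ ^ 2) }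

/-- The rotation group SO(3) as a set of 3×3 real matrices. -/
def SO3 : Set (Matrix (Fin 3) (Fin 3) ℝ) := { Q | Q.transpose * Q = 1 ∧ Q.det = 1 }

/-- The helical field `n_τ(x) = (cos(τx₃), sin(τx₃), 0)`. -/
def nhel (τ : ℝ) (x : E3) : E3 := ofV ![Real.cos (τ * x 2), Real.sin (τ * x 2), 0]

/-- `n_τ^Q(x) = Q n_τ(Qᵀ x)`. -/
def nQ (τ : ℝ) (Q : Matrix (Fin 3) (Fin 3) ℝ) (x : E3) : E3 :=
  ofV (Q.mulVec (nhel τ (ofV (Q.transpose.mulVec (fun i => x i)))))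

/-- `μ*(q,τ) = inf_{Q ∈ SO(3)} μ(q n_τ^Q)`. -/
def muStar (Ω : Set E3) (q τ : ℝ) : ℝ := ⨅ Q : SO3, mu Ω (fun x => q • nQ τ Q.1 x)

/-- `|∇u|² = Σ_{i,j} (∂ᵢuⱼ)²`. -/
def gradSq (u : E3 → E3) (x : E3) : ℝ := ∑ i, ∑ j, (pd (fun y => u y j) i x) ^ 2

/-- Second partial derivative `∂ᵢ∂ᵢ f`. -/
def pd2 (f : E3 → ℝ) (i : Fin 3) : E3 → ℝ := pd (pd f i) i

/-- Componentwise Laplacian of a vector field. -/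
def vlap (u : E3 → E3) (x : E3) : E3 := ofV (fun j => ∑ i, pd2 (fun y => u y j) i x)

/-- The Landau–de Gennes functional
`F(ψ,n) = ∫|i∇ψ+qnψ|² − κ²∫|ψ|² + (κ²/2)∫|ψ|⁴ + K₁∫(div n)² + K₂∫|curl n + τn|²`. -/
def LdG (Ω : Set E3) (q τ κ K₁ K₂ : ℝ) (ψ : E3 → ℂ) (n : E3 → E3) : ℝ :=
  (∫ x in Ω, magSq (fun y => q • n y) ψ x) - κ ^ 2 * (∫ x in Ω, ‖ψ x‖ ^ 2)
    + κ ^ 2 / 2 * (∫ x in Ω, ‖ψ x‖ ^ 4)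
    + K₁ * (∫ x in Ω, (vdiv n x) ^ 2)
    + K₂ * (∫ x in Ω, ‖vcurl n x + τ • n x‖ ^ 2)

/-- Smooth compactly supported test vector fields in `Ω`. -/
def testFields (Ω : Set E3) : Set (E3 → E3) :=
  { u | ContDiff ℝ (⊤ : ℕ∞) u ∧ HasCompactSupport u ∧ tsupport u ⊆ Ω }

/-- The quadratic form `Q_τ(u) = ‖div u‖²_{L²} + ‖curl u + τu‖²_{L²}`. -/
def Qform (Ω : Set E3) (τ : ℝ) (u : E3 → E3) : ℝ :=
  (∫ x in Ω, (vdiv u x) ^ 2) + ∫ x in Ω, ‖vcurl u x + τ • u x‖ ^ 2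

/-- `μ_τ`: the bottom of the quadratic form `Q_τ` over test fields (ground state of
`T_τ = −Δ + 2τ curl + τ²` with Dirichlet conditions). -/
def muT (Ω : Set E3) (τ : ℝ) : ℝ :=
  sInf { r : ℝ | ∃ u ∈ testFields Ω, u ≠ 0 ∧ r = Qform Ω τ u / ∫ x in Ω, ‖u x‖ ^ 2 }

/-- `λ₁`: the lowest Dirichlet eigenvalue of `−Δ` on `Ω`, via the Rayleigh quotient. -/
def lam1 (Ω : Set E3) : ℝ :=
  sInf { r : ℝ | ∃ u ∈ testFields Ω, u ≠ 0 ∧ r = (∫ x in Ω, gradSq u x) / ∫ x in Ω, ‖u x‖ ^ 2 }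

section PlanarAux

/-- Complex helper field `F(x) = (n₁ + i n₂)(x) e^{-iτ x₃}`. -/
def Fhel (τ : ℝ) (n : E3 → E3) : E3 → ℂ :=
  fun x => ((n x 0 : ℂ) + Complex.I * (n x 1 : ℂ)) *
    Complex.exp ((x 2 : ℂ) * (-(τ:ℂ) * Complex.I))

set_option maxHeartbeats 2000000 in
lemma planar_exists_D {Ω : Set E3} (hopen : IsOpen Ω) {τ : ℝ} {n : E3 → E3}
    (hn : ContDiffOn ℝ 1 n Ω) (hthird : ∀ x ∈ Ω, n x 2 = 0)
    (hunit : ∀ x ∈ Ω, (n x 0) ^ 2 + (n x 1) ^ 2 = 1)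
    (hcurl : ∀ x ∈ Ω, vcurl n x + τ • n x = 0)
    {p : E3} (hp : p ∈ Ω) :
    ∃ D : E3 →L[ℝ] ℂ, HasFDerivAt (Fhel τ n) D p ∧
      D (EuclideanSpace.single 2 1) = 0 ∧
      (D (EuclideanSpace.single 0 1) * Complex.exp ((τ * p 2 : ℝ) * Complex.I)).im
        = (D (EuclideanSpace.single 1 1) * Complex.exp ((τ * p 2 : ℝ) * Complex.I)).re ∧
      n p 0 * (D (EuclideanSpace.single 0 1) * Complex.exp ((τ * p 2 : ℝ) * Complex.I)).re
        + n p 1 * (D (EuclideanSpace.single 0 1) * Complex.exp ((τ * p 2 : ℝ) * Complex.I)).im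
          = 0 ∧
      n p 0 * (D (EuclideanSpace.single 1 1) * Complex.exp ((τ * p 2 : ℝ) * Complex.I)).re
        + n p 1 * (D (EuclideanSpace.single 1 1) * Complex.exp ((τ * p 2 : ℝ) * Complex.I)).im
          = 0 := by
  have hd : DifferentiableAt ℝ n p :=
    (hn.contDiffAt (hopen.mem_nhds hp)).differentiableAt one_ne_zero
  have hda' : DifferentiableAt ℝ (fun y => n y 0) p := by
    exact (EuclideanSpace.proj (0:Fin 3)).differentiableAt.comp p hd
  have hdb' : DifferentiableAt ℝ (fun y => n y 1) p := by
    exact (EuclideanSpace.proj (1:Fin 3)).differentiableAt.comp p hd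
  have hda := hda'.hasFDerivAt
  have hdb := hdb'.hasFDerivAt
  set Da := fderiv ℝ (fun y => n y 0) p with hDaDef
  set Db := fderiv ℝ (fun y => n y 1) p with hDbDef
  -- the third component has zero derivative
  have hA2 : fderiv ℝ (fun y => n y 2) p = 0 := by
    have hev : (fun y => n y 2) =ᶠ[nhds p] (fun _ => (0:ℝ)) :=
      Filter.eventually_of_mem (hopen.mem_nhds hp) hthird
    rw [hev.fderiv_eq, fderiv_fun_const]
    rfl
  -- the curl equations
  have hcurl0 := congrArg (fun v : E3 => v 0) (hcurl p hp)
  have hcurl1 := congrArg (fun v : E3 => v 1) (hcurl p hp)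
  have hcurl2 := congrArg (fun v : E3 => v 2) (hcurl p hp)
  simp only [vcurl, ofV, pd, PiLp.toLp_apply, PiLp.add_apply, PiLp.smul_apply, PiLp.zero_apply,
    smul_eq_mul, Matrix.cons_val_zero, Matrix.cons_val_one, Matrix.head_cons,
    Matrix.cons_val_two, Matrix.tail_cons, hA2, ContinuousLinearMap.zero_apply,
    ← hDaDef, ← hDbDef, hthird p hp] at hcurl0 hcurl1 hcurl2
  have hc1 : Db (EuclideanSpace.single 2 1) = τ * n p 0 := by linarith
  have hc2 : Da (EuclideanSpace.single 2 1) = -(τ * n p 1) := by linarith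
  have hc3 : Db (EuclideanSpace.single 0 1) = Da (EuclideanSpace.single 1 1) := by linarith
  -- the unit norm equations
  have hU : ∀ j : Fin 3,
      n p 0 * Da (EuclideanSpace.single j 1) + n p 1 * Db (EuclideanSpace.single j 1) = 0 := by
    intro j
    have hsq : HasFDerivAt (fun y => (n y 0) ^ 2 + (n y 1) ^ 2)
        ((n p 0 • Da + n p 0 • Da) + (n p 1 • Db + n p 1 • Db)) p := by
      have h := (hda.mul hda).add (hdb.mul hdb)
      simp only [pow_two]; exact h
    have hev : (fun y => (n y 0) ^ 2 + (n y 1) ^ 2) =ᶠ[nhds p] (fun _ => (1:ℝ)) :=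
      Filter.eventually_of_mem (hopen.mem_nhds hp) hunit
    have hz : ((n p 0 • Da + n p 0 • Da) + (n p 1 • Db + n p 1 • Db))
        = (0 : E3 →L[ℝ] ℝ) := by
      rw [← hsq.fderiv, hev.fderiv_eq, fderiv_fun_const]
      rfl
    have := congrArg (fun (L : E3 →L[ℝ] ℝ) => L (EuclideanSpace.single j 1)) hz
    simp only [ContinuousLinearMap.add_apply, ContinuousLinearMap.smul_apply,
      ContinuousLinearMap.zero_apply, smul_eq_mul] at this
    linarith
  -- build the derivative of Fhel
  have hg : HasFDerivAt (fun x => ((n x 0 : ℂ) + Complex.I * (n x 1 : ℂ)))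
      (Complex.ofRealCLM.comp Da + Complex.I • Complex.ofRealCLM.comp Db) p := by
    have h1 : HasFDerivAt (fun y => ((n y 0 : ℝ) : ℂ)) (Complex.ofRealCLM.comp Da) p :=
      Complex.ofRealCLM.hasFDerivAt.comp p hda
    have h2 : HasFDerivAt (fun y => ((n y 1 : ℝ) : ℂ)) (Complex.ofRealCLM.comp Db) p :=
      Complex.ofRealCLM.hasFDerivAt.comp p hdb
    exact h1.add (h2.const_mul Complex.I)
  have h3 : HasFDerivAt (fun y : E3 => ((y 2 : ℝ) : ℂ))
      (Complex.ofRealCLM.comp (EuclideanSpace.proj (2:Fin 3))) p := by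
    have hp3 : HasFDerivAt (fun y : E3 => (y 2 : ℝ))
        (EuclideanSpace.proj (2:Fin 3) : E3 →L[ℝ] ℝ) p := by
      exact (EuclideanSpace.proj (2:Fin 3) : E3 →L[ℝ] ℝ).hasFDerivAt
    exact Complex.ofRealCLM.hasFDerivAt.comp p hp3
  have h4 : HasFDerivAt (fun y : E3 => ((y 2 : ℝ) : ℂ) * (-(τ:ℂ) * Complex.I))
      ((-(τ:ℂ) * Complex.I) • (Complex.ofRealCLM.comp (EuclideanSpace.proj (2:Fin 3)))) p := by
    simpa using h3.mul_const (-(τ:ℂ) * Complex.I)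
  have h5 := h4.cexp
  have hF := hg.mul h5
  refine ⟨_, hF, ?_⟩
  have hDval : ∀ j : Fin 3,
      ((((n p 0 : ℂ) + Complex.I * (n p 1 : ℂ)) •
        Complex.exp ((p 2 : ℂ) * (-(τ:ℂ) * Complex.I)) • (-(τ:ℂ) * Complex.I) •
          Complex.ofRealCLM.comp (EuclideanSpace.proj (2:Fin 3)) +
        Complex.exp ((p 2 : ℂ) * (-(τ:ℂ) * Complex.I)) •
          (Complex.ofRealCLM.comp Da + Complex.I • Complex.ofRealCLM.comp Db))
        : E3 →L[ℝ] ℂ) (EuclideanSpace.single j 1) =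
        Complex.exp ((p 2 : ℂ) * (-(τ:ℂ) * Complex.I)) *
          ((Da (EuclideanSpace.single j 1) : ℂ)
            + Complex.I * (Db (EuclideanSpace.single j 1) : ℂ)
            + ((n p 0 : ℂ) + Complex.I * (n p 1 : ℂ)) * (-(τ:ℂ) * Complex.I)
              * (if (2:Fin 3) = j then 1 else 0)) := by
    intro j
    simp [ContinuousLinearMap.add_apply, ContinuousLinearMap.smul_apply,
      ContinuousLinearMap.comp_apply, EuclideanSpace.single_apply, smul_eq_mul]
    split_ifs <;> push_cast <;> ring
  have hEw : Complex.exp ((p 2 : ℂ) * (-(τ:ℂ) * Complex.I)) *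
      Complex.exp ((τ * p 2 : ℝ) * Complex.I) = 1 := by
    rw [← Complex.exp_add, show (p 2 : ℂ) * (-(τ:ℂ) * Complex.I)
      + ((τ * p 2 : ℝ) : ℂ) * Complex.I = 0 by push_cast; ring, Complex.exp_zero]
  have h0 : (((((n p 0 : ℂ) + Complex.I * (n p 1 : ℂ)) •
        Complex.exp ((p 2 : ℂ) * (-(τ:ℂ) * Complex.I)) • (-(τ:ℂ) * Complex.I) •
          Complex.ofRealCLM.comp (EuclideanSpace.proj (2:Fin 3)) +
        Complex.exp ((p 2 : ℂ) * (-(τ:ℂ) * Complex.I)) •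
          (Complex.ofRealCLM.comp Da + Complex.I • Complex.ofRealCLM.comp Db))
        : E3 →L[ℝ] ℂ) (EuclideanSpace.single 0 1)) *
        Complex.exp ((τ * p 2 : ℝ) * Complex.I)
      = (Da (EuclideanSpace.single 0 1) : ℂ)
          + Complex.I * (Db (EuclideanSpace.single 0 1) : ℂ) := by
    rw [hDval 0, if_neg (show ¬ (2:Fin 3) = 0 by decide)]
    linear_combination ((Da (EuclideanSpace.single 0 1) : ℂ)
      + Complex.I * (Db (EuclideanSpace.single 0 1) : ℂ)) * hEw
  have h1 : (((((n p 0 : ℂ) + Complex.I * (n p 1 : ℂ)) •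
        Complex.exp ((p 2 : ℂ) * (-(τ:ℂ) * Complex.I)) • (-(τ:ℂ) * Complex.I) •
          Complex.ofRealCLM.comp (EuclideanSpace.proj (2:Fin 3)) +
        Complex.exp ((p 2 : ℂ) * (-(τ:ℂ) * Complex.I)) •
          (Complex.ofRealCLM.comp Da + Complex.I • Complex.ofRealCLM.comp Db))
        : E3 →L[ℝ] ℂ) (EuclideanSpace.single 1 1)) *
        Complex.exp ((τ * p 2 : ℝ) * Complex.I)
      = (Da (EuclideanSpace.single 1 1) : ℂ)
          + Complex.I * (Db (EuclideanSpace.single 1 1) : ℂ) := by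
    rw [hDval 1, if_neg (show ¬ (2:Fin 3) = 1 by decide)]
    linear_combination ((Da (EuclideanSpace.single 1 1) : ℂ)
      + Complex.I * (Db (EuclideanSpace.single 1 1) : ℂ)) * hEw
  refine ⟨?_, ?_, ?_, ?_⟩
  · rw [hDval 2, if_pos rfl, hc1, hc2]
    push_cast
    linear_combination (Complex.exp ((p 2 : ℂ) * (-(τ:ℂ) * Complex.I)) *
      (-(τ:ℂ) * (n p 1 : ℂ))) * Complex.I_sq
  · rw [h0, h1]
    simp only [Complex.add_im, Complex.add_re, Complex.ofReal_re, Complex.ofReal_im,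
      Complex.mul_im, Complex.mul_re, Complex.I_re, Complex.I_im]
    rw [hc3]
    ring
  · rw [h0]
    simp only [Complex.add_im, Complex.add_re, Complex.ofReal_re, Complex.ofReal_im,
      Complex.mul_im, Complex.mul_re, Complex.I_re, Complex.I_im]
    have := hU 0
    linarith
  · rw [h1]
    simp only [Complex.add_im, Complex.add_re, Complex.ofReal_re, Complex.ofReal_im,
      Complex.mul_im, Complex.mul_re, Complex.I_re, Complex.I_im]
    have := hU 1
    linarith

end PlanarAux

set_option maxHeartbeats 2000000 in
/-- classification of planar solutions of the curl equation. A C¹ field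
`n = (n₁,n₂,0)` with `n₁²+n₂² = 1` and `curl n + τn = 0` on a connected open `Ω` is of
the form `n(x) = (cos(τx₃+θ), sin(τx₃+θ), 0)`. -/
theorem planar_solutions (Ω : Set E3) (hne : Ω.Nonempty) (hconn : IsConnected Ω)
    (hopen : IsOpen Ω) (τ : ℝ) (hτ : 0 < τ) (n : E3 → E3)
    (hn : ContDiffOn ℝ 1 n Ω)
    (hthird : ∀ x ∈ Ω, n x 2 = 0)
    (hunit : ∀ x ∈ Ω, (n x 0) ^ 2 + (n x 1) ^ 2 = 1)
    (hcurl : ∀ x ∈ Ω, vcurl n x + τ • n x = 0) :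
    ∃ θ : ℝ, ∀ x ∈ Ω,
      n x = ofV ![Real.cos (τ * x 2 + θ), Real.sin (τ * x 2 + θ), 0] := by
  classical
  obtain ⟨x₀, hx₀⟩ := hne
  set F := Fhel τ n with hFdef
  set e2 : E3 := EuclideanSpace.single 2 1 with he2def
  have he2 : ‖e2‖ = 1 := by simp [he2def]
  have hq2 : ∀ (p : E3) (t : ℝ), (p + t • e2) 2 = p 2 + t := by
    intro p t
    simp [he2def, PiLp.add_apply, PiLp.smul_apply, EuclideanSpace.single_apply]
  -- Step 1: F has zero derivative at every point of Ω
  have hD0 : ∀ p ∈ Ω, HasFDerivAt F (0 : E3 →L[ℝ] ℂ) p := by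
    intro p hp
    obtain ⟨ε, hε, hball⟩ := Metric.isOpen_iff.1 hopen p hp
    obtain ⟨Dp, hDp, hDp2, hDp3, hDp4, hDp5⟩ :=
      planar_exists_D hopen hn hthird hunit hcurl hp
    have hmem : ∀ y ∈ Metric.ball p (ε/2), ∀ s : ℝ, |s| < ε/2 → y + s • e2 ∈ Ω := by
      intro y hy s hs
      apply hball
      rw [Metric.mem_ball] at hy ⊢
      have h1 : dist (y + s • e2) y = |s| := by
        rw [dist_eq_norm]
        simp [norm_smul, he2]
      calc dist (y + s • e2) p ≤ dist (y + s • e2) y + dist y p := dist_triangle _ _ _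
        _ < ε := by rw [h1]; linarith
    -- constancy of F along the e2 direction
    have hconst : ∀ t : ℝ, |t| < ε/2 → ∀ y ∈ Metric.ball p (ε/2), F (y + t • e2) = F y := by
      intro t ht y hy
      have hder : ∀ s ∈ Ioo (-(ε/2)) (ε/2), HasDerivAt (fun s' => F (y + s' • e2)) 0 s := by
        intro s hs
        have hsΩ : y + s • e2 ∈ Ω := hmem y hy s (abs_lt.2 ⟨hs.1, hs.2⟩)
        obtain ⟨D, hD, hD2, -, -, -⟩ := planar_exists_D hopen hn hthird hunit hcurl hsΩ
        have hin : HasDerivAt (fun s' : ℝ => y + s' • e2) e2 s := by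
          simpa using ((hasDerivAt_id s).smul_const e2).const_add y
        have hcomp := hD.comp_hasDerivAt s hin
        rw [← he2def] at hD2
        rwa [hD2] at hcomp
      have hdiff : DifferentiableOn ℝ (fun s' => F (y + s' • e2)) (Ioo (-(ε/2)) (ε/2)) :=
        fun s hs => ((hder s hs).differentiableAt).differentiableWithinAt
      have hzero : ∀ s ∈ Ioo (-(ε/2)) (ε/2),
          fderivWithin ℝ (fun s' => F (y + s' • e2)) (Ioo (-(ε/2)) (ε/2)) s = 0 := by
        intro s hs
        rw [fderivWithin_of_isOpen isOpen_Ioo hs, ((hder s hs).hasFDerivAt).fderiv]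
        ext z
        simp
      have hε2 : (0:ℝ) < ε/2 := lt_of_le_of_lt (abs_nonneg t) ht
      have h0mem : (0:ℝ) ∈ Ioo (-(ε/2)) (ε/2) := ⟨by linarith, hε2⟩
      have htmem : t ∈ Ioo (-(ε/2)) (ε/2) := ⟨(abs_lt.1 ht).1, (abs_lt.1 ht).2⟩
      have := (convex_Ioo (-(ε/2)) (ε/2)).is_const_of_fderivWithin_eq_zero
        hdiff hzero htmem h0mem
      simpa using this
    -- the derivative at translated points coincides with Dp
    have hrel : ∀ t ∈ Ioo (-(ε/2)) (ε/2),
        (Dp (EuclideanSpace.single 0 1) *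
          Complex.exp ((τ * (p 2 + t) : ℝ) * Complex.I)).im
        = (Dp (EuclideanSpace.single 1 1) *
          Complex.exp ((τ * (p 2 + t) : ℝ) * Complex.I)).re := by
      intro t ht
      have hε2 : (0:ℝ) < ε/2 := half_pos hε
      have hpball : p ∈ Metric.ball p (ε/2) := Metric.mem_ball_self hε2
      have htΩ : p + t • e2 ∈ Ω := hmem p hpball t (abs_lt.2 ⟨ht.1, ht.2⟩)
      obtain ⟨Dq, hDq, -, hq3, -, -⟩ := planar_exists_D hopen hn hthird hunit hcurl htΩ
      have hev : (fun y => F (y + t • e2)) =ᶠ[nhds p] F :=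
        Filter.eventually_of_mem (Metric.ball_mem_nhds p hε2)
          (fun y hy => hconst t (abs_lt.2 ⟨ht.1, ht.2⟩) y hy)
      have hin : HasFDerivAt (fun y : E3 => y + t • e2)
          (ContinuousLinearMap.id ℝ E3) p := (hasFDerivAt_id p).add_const _
      have hcomp : HasFDerivAt (fun y => F (y + t • e2)) Dq p := by
        have := hDq.comp p hin
        exact this
      have hFq : HasFDerivAt F Dq p := hcomp.congr_of_eventuallyEq hev.symm
      have hDpq : Dq = Dp := hFq.unique hDp
      rw [hDpq, hq2 p t] at hq3
      exact hq3
    -- the trigonometric argument: extract the Cauchy-Riemann relation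
    set c0 := Dp (EuclideanSpace.single 0 1) with hc0def
    set c1 := Dp (EuclideanSpace.single 1 1) with hc1def
    have hε2 : (0:ℝ) < ε/2 := half_pos hε
    set s0 : ℝ := τ * p 2 with hs0def
    set δ : ℝ := τ * (ε/2) with hδdef
    have hδ : 0 < δ := mul_pos hτ hε2
    set ψ : ℝ → ℝ := fun s => (c0.re + c1.im) * Real.sin s + (c0.im - c1.re) * Real.cos s
      with hψdef
    have hψ : ∀ s ∈ Ioo (s0 - δ) (s0 + δ), ψ s = 0 := by
      intro s hs
      have htm : (s - s0)/τ ∈ Ioo (-(ε/2)) (ε/2) := by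
        constructor
        · rw [lt_div_iff₀ hτ]
          have := hs.1
          rw [hδdef] at this
          nlinarith
        · rw [div_lt_iff₀ hτ]
          have := hs.2
          rw [hδdef] at this
          nlinarith
      have h := hrel _ htm
      have hss : τ * (p 2 + (s - s0)/τ) = s := by
        field_simp
        rw [hs0def]
        ring
      rw [hss] at h
      simp only [Complex.mul_im, Complex.mul_re, Complex.exp_ofReal_mul_I_re,
        Complex.exp_ofReal_mul_I_im] at h
      rw [hψdef]
      dsimp only
      linarith
    have hs0mem : s0 ∈ Ioo (s0 - δ) (s0 + δ) := ⟨by linarith, by linarith⟩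
    have hψs0 : ψ s0 = 0 := hψ s0 hs0mem
    have hdψ : HasDerivAt ψ ((c0.re + c1.im) * Real.cos s0
        + (c0.im - c1.re) * (-Real.sin s0)) s0 :=
      ((Real.hasDerivAt_sin s0).const_mul _).add ((Real.hasDerivAt_cos s0).const_mul _)
    have hev0 : ψ =ᶠ[nhds s0] (fun _ => (0:ℝ)) :=
      Filter.eventually_of_mem (Ioo_mem_nhds hs0mem.1 hs0mem.2) hψ
    have hderiv0 : deriv ψ s0 = 0 := by
      rw [hev0.deriv_eq]
      simp
    rw [hdψ.deriv] at hderiv0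
    have hψs0' : (c0.re + c1.im) * Real.sin s0 + (c0.im - c1.re) * Real.cos s0 = 0 := by
      have h := hψs0
      rw [hψdef] at h
      exact h
    have hAB : c0.re + c1.im = 0 ∧ c0.im - c1.re = 0 := by
      constructor
      · linear_combination Real.sin s0 * hψs0' + Real.cos s0 * hderiv0
          - (c0.re + c1.im) * Real.sin_sq_add_cos_sq s0
      · linear_combination Real.cos s0 * hψs0' - Real.sin s0 * hderiv0
          - (c0.im - c1.re) * Real.sin_sq_add_cos_sq s0
    -- now conclude c0 = c1 = 0 using the unit relations
    have huu := hunit p hp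
    have hwne : Complex.exp ((τ * p 2 : ℝ) * Complex.I) ≠ 0 := Complex.exp_ne_zero _
    set d0 : ℂ := c0 * Complex.exp ((τ * p 2 : ℝ) * Complex.I) with hd0def
    set d1 : ℂ := c1 * Complex.exp ((τ * p 2 : ℝ) * Complex.I) with hd1def
    have hc1c0 : c1 = -Complex.I * c0 := by
      have h1 : (-Complex.I * c0).re = c0.im := by simp
      have h2 : (-Complex.I * c0).im = -c0.re := by simp
      apply Complex.ext
      · rw [h1]; linarith [hAB.2]
      · rw [h2]; linarith [hAB.1]
    have hd1d0 : d1 = -Complex.I * d0 := by rw [hd1def, hd0def, hc1c0]; ring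
    have hd1re : d1.re = d0.im := by rw [hd1d0]; simp
    have hd1im : d1.im = -d0.re := by rw [hd1d0]; simp
    have hd0re : d0.re = 0 := by
      have h1 := hDp4
      have h2 := hDp5
      rw [hd1re, hd1im] at h2
      linear_combination n p 0 * h1 - n p 1 * h2 - d0.re * huu
    have hd0im : d0.im = 0 := by
      have h1 := hDp4
      have h2 := hDp5
      rw [hd1re, hd1im] at h2
      linear_combination n p 1 * h1 + n p 0 * h2 - d0.im * huu
    have hd0 : d0 = 0 := Complex.ext hd0re hd0im
    have hc0z : c0 = 0 := by
      rcases mul_eq_zero.1 (hd0def ▸ hd0 : c0 * _ = 0) with h | h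
      · exact h
      · exact absurd h hwne
    have hd1z : d1 = 0 := by rw [hd1d0, hd0, mul_zero]
    have hc1z : c1 = 0 := by
      rcases mul_eq_zero.1 (hd1def ▸ hd1z : c1 * _ = 0) with h | h
      · exact h
      · exact absurd h hwne
    -- all three directional derivatives vanish, so Dp = 0
    have hall : ∀ v : E3, Dp v = 0 := by
      intro v
      have hv : v = ∑ i : Fin 3, v i • (EuclideanSpace.single i (1:ℝ)) := by
        ext j
        rw [Fin.sum_univ_three]
        simp [EuclideanSpace.single_apply]
        fin_cases j <;> simp
      have hz0 : Dp (EuclideanSpace.single 0 1) = 0 := by rw [← hc0def]; exact hc0z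
      have hz1 : Dp (EuclideanSpace.single 1 1) = 0 := by rw [← hc1def]; exact hc1z
      rw [hv, map_sum, Fin.sum_univ_three]
      simp only [_root_.map_smul, hz0, hz1, hDp2, smul_zero, add_zero, zero_add]
    have hDpz : Dp = 0 := ContinuousLinearMap.ext hall
    rw [← hDpz]
    exact hDp
  -- Step 2: F is constant on Ω
  have hFconst : ∀ x ∈ Ω, F x = F x₀ := by
    have hpc : PreconnectedSpace Ω := Subtype.preconnectedSpace hconn.isPreconnected
    have hlc' : IsLocallyConstant (fun z : Ω => F z.1) := by
      rw [IsLocallyConstant.iff_exists_open]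
      rintro ⟨p, hp⟩
      obtain ⟨ε, hε, hball⟩ := Metric.isOpen_iff.1 hopen p hp
      refine ⟨Subtype.val ⁻¹' Metric.ball p ε,
        Metric.isOpen_ball.preimage continuous_subtype_val, Set.mem_preimage.2 (Metric.mem_ball_self hε), ?_⟩
      rintro ⟨y, hyΩ⟩ hy
      have hcst : ∀ z ∈ Metric.ball p ε, F z = F p := by
        intro z hz
        exact (convex_ball p ε).is_const_of_fderivWithin_eq_zero
          (fun w hw => ((hD0 w (hball hw)).differentiableAt).differentiableWithinAt)
          (fun w hw => by
            rw [fderivWithin_of_isOpen Metric.isOpen_ball hw, (hD0 w (hball hw)).fderiv])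
          hz (Metric.mem_ball_self hε)
      exact hcst y hy
    intro x hx
    exact hlc'.apply_eq_of_preconnectedSpace ⟨x, hx⟩ ⟨x₀, hx₀⟩
  -- Step 3: identify the constant and conclude
  have habs : ‖F x₀‖ = 1 := by
    rw [hFdef]
    show ‖(((n x₀ 0 : ℂ) + Complex.I * (n x₀ 1 : ℂ)) *
      Complex.exp ((x₀ 2 : ℂ) * (-(τ:ℂ) * Complex.I)))‖ = 1
    rw [norm_mul, Complex.norm_exp]
    have hre : ((x₀ 2 : ℂ) * (-(τ:ℂ) * Complex.I)).re = 0 := by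
      simp [Complex.mul_re, Complex.mul_im]
    rw [hre, Real.exp_zero, mul_one]
    have h1 : ‖(n x₀ 0 : ℂ) + Complex.I * (n x₀ 1 : ℂ)‖ ^ 2
        = (n x₀ 0) ^ 2 + (n x₀ 1) ^ 2 := by
      rw [← Complex.normSq_eq_norm_sq]
      simp [Complex.normSq_apply]
      ring
    have h2 := hunit x₀ hx₀
    nlinarith [norm_nonneg ((n x₀ 0 : ℂ) + Complex.I * (n x₀ 1 : ℂ))]
  refine ⟨(F x₀).arg, fun x hx => ?_⟩
  have hexpθ : Complex.exp (((F x₀).arg : ℂ) * Complex.I) = F x₀ := by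
    have := Complex.norm_mul_exp_arg_mul_I (F x₀)
    rwa [habs, Complex.ofReal_one, one_mul] at this
  have h1 : F x = F x₀ := hFconst x hx
  have hgx : ((n x 0 : ℂ) + Complex.I * (n x 1 : ℂ))
      = Complex.exp ((τ * x 2 + (F x₀).arg : ℝ) * Complex.I) := by
    have h1' : ((n x 0 : ℂ) + Complex.I * (n x 1 : ℂ)) *
        Complex.exp ((x 2 : ℂ) * (-(τ:ℂ) * Complex.I))
        = Complex.exp (((F x₀).arg : ℂ) * Complex.I) := by
      rw [hexpθ]
      exact h1
    have hprod : Complex.exp ((x 2 : ℂ) * (-(τ:ℂ) * Complex.I)) *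
        Complex.exp ((τ * x 2 : ℝ) * Complex.I) = 1 := by
      rw [← Complex.exp_add, show (x 2 : ℂ) * (-(τ:ℂ) * Complex.I)
        + ((τ * x 2 : ℝ) : ℂ) * Complex.I = 0 by push_cast; ring, Complex.exp_zero]
    have hsum : Complex.exp (((F x₀).arg : ℂ) * Complex.I) *
        Complex.exp ((τ * x 2 : ℝ) * Complex.I)
        = Complex.exp ((τ * x 2 + (F x₀).arg : ℝ) * Complex.I) := by
      rw [← Complex.exp_add]
      push_cast
      ring_nf
    linear_combination Complex.exp ((τ * x 2 : ℝ) * Complex.I) * h1'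
      - ((n x 0 : ℂ) + Complex.I * (n x 1 : ℂ)) * hprod + hsum
  have hre : n x 0 = Real.cos (τ * x 2 + (F x₀).arg) := by
    have h := congrArg Complex.re hgx
    rw [Complex.exp_ofReal_mul_I_re] at h
    simpa using h
  have him : n x 1 = Real.sin (τ * x 2 + (F x₀).arg) := by
    have h := congrArg Complex.im hgx
    rw [Complex.exp_ofReal_mul_I_im] at h
    simpa using h
  ext j
  fin_cases j
  · simpa [ofV] using hre
  · simpa [ofV] using him
  · simpa [ofV] using hthird x hx
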